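/- The generating function f(x,y) = Σ_{n,k ≥ 0} f_{n,k} x^n y^k, where f_{n,k} is the number of binary words of length n avoiding the substring 11 that have exactly k neighbors also avoiding 11, equals -(x²y² - x²y - xy - 1)/(x³y² - x³y - x²y - xy + 1) as a formal power series identity. -/

import Mathlib

open scoped Classical

/-- A binary word `w` of length `n` is a Fibonacci word if it has no two consecutive `1`s. -/
def FibWord {n : ℕ} (w : Fin n → Bool) : Prop :=
  ∀ (i : ℕ) (h : i + 1 < n), ¬(w ⟨i, by omega⟩ = true ∧ w ⟨i + 1, h⟩ = true)

/-- The number of clean (Fibonacci) neighbors of `w`: words at Hamming distance exactly 1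
from `w` that are Fibonacci words. -/
noncomputable def NCN {n : ℕ} (w : Fin n → Bool) : ℕ :=
  Nat.card {v : Fin n → Bool // FibWord v ∧ hammingDist w v = 1}

/-- `f n k` is the number of Fibonacci words of length `n` with exactly `k`
Fibonacci neighbors. -/
noncomputable def f (n k : ℕ) : ℕ := Nat.card {w : Fin n → Bool // FibWord w ∧ NCN w = k}

/-- The bivariate generating function of `f`, with `X 0 = x` tracking the length and
`X 1 = y` tracking the number of clean neighbors. -/
noncomputable def F : MvPowerSeries (Fin 2) ℤ := fun d => (f (d 0) (d 1) : ℤ)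

/-! ### The local statistic -/

/-- `nb L w` counts positions of `w` whose flip keeps the word 11-free, where `L` is the
letter immediately to the left of `w` (`false` if none). -/
def nb : Bool → List Bool → ℕ
  | _, [] => 0
  | L, x :: v => (if x = true ∨ (L = false ∧ v.headI = false) then 1 else 0) + nb x v

/-- Extension of a finite word by `false`s. -/
def ext {n : ℕ} (w : Fin n → Bool) (i : ℕ) : Bool := if h : i < n then w ⟨i, h⟩ else false

def good {n : ℕ} (L : Bool) (w : Fin n → Bool) (i : ℕ) : Bool :=
  ext w i || ((if i = 0 then !L else !ext w (i - 1)) && !ext w (i + 1))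

lemma ext_lt {n : ℕ} (w : Fin n → Bool) (i : ℕ) (h : i < n) : ext w i = w ⟨i, h⟩ := by
  simp [ext, h]

lemma ext_ge {n : ℕ} (w : Fin n → Bool) (i : ℕ) (h : ¬ i < n) : ext w i = false := by
  simp [ext, h]

lemma ext_tail {n : ℕ} (w : Fin (n + 1) → Bool) (i : ℕ) :
    ext (Fin.tail w) i = ext w (i + 1) := by
  unfold ext
  by_cases h : i < n
  · rw [dif_pos h, dif_pos (by omega)]
    rfl
  · rw [dif_neg h, dif_neg (by omega)]

lemma headI_ofFn {n : ℕ} (v : Fin n → Bool) : (List.ofFn v).headI = ext v 0 := by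
  cases n with
  | zero => simp [ext]
  | succ m => rw [List.ofFn_succ]; simp [ext_lt v 0 (by omega)]

lemma ofFn_cons {n : ℕ} (b : Bool) (v : Fin n → Bool) :
    List.ofFn (Fin.cons b v : Fin (n+1) → Bool) = b :: List.ofFn v := by
  simp [List.ofFn_succ]

lemma tail_cons' {n : ℕ} (b : Bool) (v : Fin n → Bool) : Fin.tail (Fin.cons b v : Fin (n+1) → Bool) = v := by
  funext i
  simp [Fin.tail]

lemma good_succ {n : ℕ} (L : Bool) (w : Fin (n + 1) → Bool) (j : ℕ) :
    good L w (j + 1) = good (w 0) (Fin.tail w) j := by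
  unfold good
  have h1 : ext (Fin.tail w) j = ext w (j + 1) := ext_tail w j
  have h2 : ext (Fin.tail w) (j + 1) = ext w (j + 1 + 1) := ext_tail w (j + 1)
  rw [h1, h2]
  congr 2
  cases j with
  | zero =>
    rw [if_neg (by omega), if_pos rfl, ext_lt w 0 (by omega)]
    rfl
  | succ m =>
    rw [if_neg (by omega), if_neg (by omega),
      show m + 1 + 1 - 1 = m + 1 from rfl, show m + 1 - 1 = m from rfl, ext_tail w m]

lemma sum_good : ∀ (n : ℕ) (L : Bool) (w : Fin n → Bool),
    (∑ i : Fin n, if good L w i.1 = true then 1 else 0) = nb L (List.ofFn w) := by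
  intro n
  induction n with
  | zero => intro L w; simp [nb]
  | succ m ih =>
    intro L w
    rw [Fin.sum_univ_succ]
    have h0 : List.ofFn w = w 0 :: List.ofFn (Fin.tail w) := by
      rw [← ofFn_cons, Fin.cons_self_tail]
    rw [h0]
    show _ = (if w 0 = true ∨ (L = false ∧ (List.ofFn (Fin.tail w)).headI = false) then 1 else 0)
        + nb (w 0) (List.ofFn (Fin.tail w))
    rw [← ih (w 0) (Fin.tail w)]
    have hterm : ∀ j : Fin m, good L w ((Fin.succ j) : Fin (m+1)).1 = good (w 0) (Fin.tail w) j.1 := by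
      intro j
      have : ((Fin.succ j) : Fin (m+1)).1 = j.1 + 1 := rfl
      rw [this, good_succ]
    have hsum : (∑ j : Fin m, if good L w ((Fin.succ j) : Fin (m+1)).1 = true then 1 else 0)
        = ∑ j : Fin m, if good (w 0) (Fin.tail w) j.1 = true then 1 else 0 := by
      apply Finset.sum_congr rfl
      intro j _
      rw [hterm j]
    rw [hsum]
    congr 1
    -- head term
    have he0 : ext w 0 = w 0 := by rw [ext_lt w 0 (by omega)]; rfl
    have he1 : ext w (0 + 1) = (List.ofFn (Fin.tail w)).headI := by
      rw [headI_ofFn]; exact (ext_tail w 0).symm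
    have hg : good L w 0 = (w 0 || (!L && !(List.ofFn (Fin.tail w)).headI)) := by
      unfold good
      rw [if_pos rfl, he1, he0]
    simp only [Fin.val_zero, hg]
    cases w 0 <;> cases L <;> cases (List.ofFn (Fin.tail w)).headI <;> simp

/-! ### Flip characterization -/

lemma fib_nil (v : Fin 0 → Bool) : FibWord v := by
  intro i h
  omega

lemma cons_mk_zero {n : ℕ} (b : Bool) (v : Fin n → Bool) (h : 0 < n + 1) :
    (Fin.cons b v : Fin (n+1) → Bool) ⟨0, h⟩ = b := rfl

lemma cons_mk_succ {n : ℕ} (b : Bool) (v : Fin n → Bool) (i : ℕ) (h : i + 1 < n + 1) :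
    (Fin.cons b v : Fin (n+1) → Bool) ⟨i+1, h⟩ = v ⟨i, by omega⟩ := rfl

lemma fib_flip_iff {n : ℕ} (w : Fin n → Bool) (hw : FibWord w) (i : Fin n) :
    FibWord (Function.update w i (!(w i))) ↔ good false w i.1 = true := by
  have hui : Function.update w i (!(w i)) i = !(w i) := Function.update_self i _ w
  have huj : ∀ j : Fin n, j ≠ i → Function.update w i (!(w i)) j = w j :=
    fun j h => Function.update_of_ne h _ w
  have hexti : ext w i.1 = w i := by rw [ext_lt w i.1 i.2, Fin.eta]
  cases hwi : w i with
  | true =>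
    rw [hwi] at hui huj
    constructor
    · intro _
      unfold good
      rw [hexti, hwi]
      simp
    · intro _
      intro j hj hc
      by_cases h1 : (⟨j, by omega⟩ : Fin n) = i
      · rw [h1, hui] at hc
        simp at hc
      · by_cases h2 : (⟨j+1, hj⟩ : Fin n) = i
        · rw [h2, hui] at hc
          simp at hc
        · rw [huj _ h1, huj _ h2] at hc
          exact hw j hj hc
  | false =>
    rw [hwi] at hui huj
    have hui' : Function.update w i (!false) i = true := by rw [hui]; rfl
    have hgood : good false w i.1 = true ↔
        (i.1 = 0 ∨ ext w (i.1 - 1) = false) ∧ ext w (i.1 + 1) = false := by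
      unfold good
      rw [hexti, hwi]
      by_cases h0 : i.1 = 0 <;> simp [h0]
    rw [hgood]
    constructor
    · intro hu
      constructor
      · by_cases h0 : i.1 = 0
        · exact Or.inl h0
        · right
          have hr : (i.1 - 1) + 1 < n := by omega
          have heq : (⟨i.1 - 1 + 1, hr⟩ : Fin n) = i := by
            apply Fin.ext; simp; omega
          have hne : (⟨i.1 - 1, by omega⟩ : Fin n) ≠ i := by
            intro hcc
            have := congrArg Fin.val hcc
            simp at this
            omega
          have := hu (i.1 - 1) hr
          rw [heq, hui', huj _ hne] at this
          rw [ext_lt w (i.1 - 1) (by omega)]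
          cases hv : w ⟨i.1 - 1, by omega⟩
          · rfl
          · exact absurd ⟨hv, rfl⟩ this
      · by_cases hr : i.1 + 1 < n
        · have heq : (⟨i.1, by omega⟩ : Fin n) = i := Fin.eta i _
          have hne : (⟨i.1 + 1, hr⟩ : Fin n) ≠ i := by
            intro hcc
            have := congrArg Fin.val hcc
            simp at this
          have := hu i.1 hr
          rw [heq, hui', huj _ hne] at this
          rw [ext_lt w (i.1 + 1) hr]
          cases hv : w ⟨i.1 + 1, hr⟩
          · rfl
          · exact absurd ⟨rfl, hv⟩ this
        · exact ext_ge w _ hr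
    · rintro ⟨hL, hR⟩ j hj hc
      by_cases e1 : j = i.1
      · have hne : (⟨j + 1, hj⟩ : Fin n) ≠ i := by
          intro hcc
          have := congrArg Fin.val hcc
          simp at this
          omega
        rw [huj _ hne] at hc
        rw [ext_lt w (i.1+1) (by omega)] at hR
        refine absurd hc.2 ?_
        have : (⟨j + 1, hj⟩ : Fin n) = ⟨i.1 + 1, by omega⟩ := by apply Fin.ext; simp [e1]
        rw [this, hR]
        simp
      · by_cases e2 : j + 1 = i.1
        · have hne : (⟨j, by omega⟩ : Fin n) ≠ i := by
            intro hcc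
            have := congrArg Fin.val hcc
            simp at this
            omega
          rw [huj _ hne] at hc
          rcases hL with h0 | hL
          · omega
          · rw [ext_lt w (i.1-1) (by omega)] at hL
            refine absurd hc.1 ?_
            have : (⟨j, by omega⟩ : Fin n) = ⟨i.1 - 1, by omega⟩ := by
              apply Fin.ext; simp; omega
            rw [this, hL]
            simp
        · have hne1 : (⟨j, by omega⟩ : Fin n) ≠ i := by
            intro hcc
            have := congrArg Fin.val hcc
            simp at this
            omega
          have hne2 : (⟨j + 1, hj⟩ : Fin n) ≠ i := by
            intro hcc
            have := congrArg Fin.val hcc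
            simp at this
            omega
          rw [huj _ hne1, huj _ hne2] at hc
          exact hw j hj hc

lemma hamming_update {n : ℕ} (w : Fin n → Bool) (i : Fin n) :
    hammingDist w (Function.update w i (!(w i))) = 1 := by
  rw [hammingDist]
  have : ({j | w j ≠ Function.update w i (!(w i)) j} : Finset (Fin n)) = {i} := by
    ext j
    simp only [Finset.mem_filter, Finset.mem_univ, true_and, Finset.mem_singleton]
    constructor
    · intro h
      by_contra hji
      exact h (Function.update_of_ne hji _ w).symm
    · rintro rfl
      rw [Function.update_self]
      cases w j <;> simp
  rw [this]
  exact Finset.card_singleton i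

lemma card_sum {α : Type*} [Fintype α] (P : α → Prop) :
    Nat.card {x // P x} = ∑ x : α, if P x then 1 else 0 := by
  classical
  rw [Nat.card_eq_fintype_card, Fintype.card_subtype, Finset.card_filter]

lemma NCN_eq {n : ℕ} (w : Fin n → Bool) (hw : FibWord w) :
    NCN w = nb false (List.ofFn w) := by
  have key : NCN w = Nat.card {i : Fin n // good false w i.1 = true} := by
    rw [NCN]
    refine (Nat.card_eq_of_bijective
      (fun p => (⟨Function.update w p.1 (!(w p.1)),
        (fib_flip_iff w hw p.1).mpr p.2, hamming_update w p.1⟩ :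
        {v : Fin n → Bool // FibWord v ∧ hammingDist w v = 1})) ?_).symm
    constructor
    · rintro ⟨i, hi⟩ ⟨j, hj⟩ h
      simp only [Subtype.mk_eq_mk] at h ⊢
      by_contra hij
      have hc := congrFun h i
      rw [Function.update_self, Function.update_of_ne hij] at hc
      cases w i <;> simp_all
    · rintro ⟨v, hv, hd⟩
      rw [hammingDist] at hd
      obtain ⟨i, hi⟩ := Finset.card_eq_one.mp hd
      have hvi : v = Function.update w i (!(w i)) := by
        funext j
        by_cases hji : j = i
        · subst hji
          rw [Function.update_self]
          have hmem : j ∈ ({j} : Finset (Fin n)) := Finset.mem_singleton_self j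
          rw [← hi] at hmem
          simp only [Finset.mem_filter, Finset.mem_univ, true_and] at hmem
          cases hwj : w j <;> cases hvj : v j <;> simp_all
        · have hnm : j ∉ ({i} : Finset (Fin n)) := by simp [hji]
          rw [← hi] at hnm
          simp only [Finset.mem_filter, Finset.mem_univ, true_and, not_not] at hnm
          rw [Function.update_of_ne hji]
          exact hnm.symm
      exact ⟨⟨i, (fib_flip_iff w hw i).mp (hvi ▸ hv)⟩, Subtype.ext hvi.symm⟩
  rw [key, card_sum, ← sum_good n false w]
  apply Finset.sum_congr rfl
  intro i _
  congr 1

/-! ### Cons decomposition of FibWord -/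

lemma fib_cons {n : ℕ} (b : Bool) (v : Fin n → Bool) :
    FibWord (Fin.cons b v : Fin (n+1) → Bool) ↔ ((b && ext v 0) = false) ∧ FibWord v := by
  constructor
  · intro h
    refine ⟨?_, ?_⟩
    · by_cases hn : 0 < n
      · have h0 := h 0 (by omega)
        rw [cons_mk_zero, cons_mk_succ] at h0
        rw [ext_lt v 0 hn]
        cases hb : b
        · rfl
        · cases hv : v ⟨0, hn⟩
          · rfl
          · exact absurd ⟨hb, by convert hv⟩ h0
      · rw [ext_ge v 0 hn]
        cases b <;> rfl
    · intro i hi hc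
      have := h (i+1) (by omega)
      rw [cons_mk_succ, cons_mk_succ] at this
      exact this ⟨by convert hc.1, by convert hc.2⟩
  · rintro ⟨hb, hv⟩ i hi hc
    cases i with
    | zero =>
      rw [cons_mk_zero, cons_mk_succ] at hc
      have hn : 0 < n := by omega
      rw [ext_lt v 0 hn] at hb
      rw [hc.1] at hb
      have : v ⟨0, hn⟩ = true := by convert hc.2
      rw [this] at hb
      simp at hb
    | succ j =>
      rw [cons_mk_succ, cons_mk_succ] at hc
      refine hv j (by omega) ⟨by convert hc.1, by convert hc.2⟩

lemma nb_ff (l : List Bool) : nb false (false :: l) = (if l.headI = false then 1 else 0) + nb false l := by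
  simp [nb]

lemma nb_ft (l : List Bool) : nb false (true :: l) = 1 + nb true l := by
  simp [nb]

lemma nb_tf (l : List Bool) : nb true (false :: l) = nb false l := by
  simp [nb]

lemma nb_tt (l : List Bool) : nb true (true :: l) = 1 + nb true l := by
  simp [nb]

/-! ### The refined counts -/

noncomputable def a0 (n k : ℕ) : ℕ :=
  Nat.card {w : Fin n → Bool // FibWord w ∧ nb false (List.ofFn w) = k ∧
    (List.ofFn w).head? = some false}

noncomputable def a1 (n k : ℕ) : ℕ :=
  Nat.card {w : Fin n → Bool // FibWord w ∧ nb false (List.ofFn w) = k ∧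
    (List.ofFn w).head? = some true}

noncomputable def b0 (n k : ℕ) : ℕ :=
  Nat.card {w : Fin n → Bool // FibWord w ∧ nb true (List.ofFn w) = k ∧
    (List.ofFn w).head? = some false}

lemma sum_cons {n : ℕ} (g : (Fin (n+1) → Bool) → ℕ) :
    ∑ w : Fin (n+1) → Bool, g w
      = ∑ v : Fin n → Bool, (g (Fin.cons false v) + g (Fin.cons true v)) := by
  rw [← Equiv.sum_comp (Fin.consEquiv (fun _ => Bool)) g, Fintype.sum_prod_type, Fintype.sum_bool]
  rw [← Finset.sum_add_distrib]
  apply Finset.sum_congr rfl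
  intro v _
  rw [Nat.add_comm]
  rfl

lemma a0_zero (k : ℕ) : a0 0 k = 0 := by
  rw [a0, card_sum]
  apply Finset.sum_eq_zero
  intro v _
  rw [if_neg]
  rintro ⟨-, -, h⟩
  rw [List.ofFn_zero] at h
  simp at h

lemma a1_zero (k : ℕ) : a1 0 k = 0 := by
  rw [a1, card_sum]
  apply Finset.sum_eq_zero
  intro v _
  rw [if_neg]
  rintro ⟨-, -, h⟩
  rw [List.ofFn_zero] at h
  simp at h

lemma b0_zero (k : ℕ) : b0 0 k = 0 := by
  rw [b0, card_sum]
  apply Finset.sum_eq_zero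
  intro v _
  rw [if_neg]
  rintro ⟨-, -, h⟩
  rw [List.ofFn_zero] at h
  simp at h

lemma ofFn_eq_cons {n : ℕ} (w : Fin (n+1) → Bool) :
    List.ofFn w = w 0 :: List.ofFn (Fin.tail w) := by
  rw [← ofFn_cons, Fin.cons_self_tail]

lemma head?_ofFn {n : ℕ} (w : Fin (n+1) → Bool) : (List.ofFn w).head? = some (w 0) := by
  rw [ofFn_eq_cons]
  rfl

lemma headI_ofFn' {n : ℕ} (w : Fin (n+1) → Bool) : (List.ofFn w).headI = w 0 := by
  rw [ofFn_eq_cons]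
  rfl

lemma ext_zero' {m : ℕ} (v : Fin (m+1) → Bool) : ext v 0 = v 0 := by
  rw [ext_lt v 0 (by omega)]
  rfl

/-! ### Recurrences -/

lemma R1a (n k : ℕ) :
    a0 (n+1) (k+1) = a0 n k + a1 n (k+1) + (if n = 0 ∧ k = 0 then 1 else 0) := by
  rw [a0, a0, a1, card_sum, card_sum, card_sum, sum_cons]
  cases n with
  | zero =>
    rw [Fintype.sum_unique, Fintype.sum_unique, Fintype.sum_unique]
    simp only [ofFn_cons, List.ofFn_zero]
    simp [nb_ff, nb_ft, fib_cons, fib_nil, ext_ge, nb]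
  | succ m =>
    rw [if_neg (by simp), Nat.add_zero, ← Finset.sum_add_distrib]
    apply Finset.sum_congr rfl
    intro v _
    simp only [ofFn_cons, nb_ff, nb_ft, fib_cons, fib_nil, List.head?_cons,
      headI_ofFn', head?_ofFn, ext_zero']
    cases hv : v 0 with
    | false =>
      simp only [hv]
      simp [fib_nil, show ∀ x : ℕ, (1 + x = k + 1) ↔ (x = k) from fun x => by omega]
    | true =>
      simp [hv]

lemma R1b (n : ℕ) : a0 (n+1) 0 = a1 n 0 := by
  rw [a0, a1, card_sum, card_sum, sum_cons]
  cases n with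
  | zero =>
    rw [Fintype.sum_unique, Fintype.sum_unique]
    simp only [ofFn_cons, List.ofFn_zero]
    simp [nb_ff, nb_ft, fib_cons, fib_nil, ext_ge, nb]
  | succ m =>
    apply Finset.sum_congr rfl
    intro v _
    simp only [ofFn_cons, nb_ff, nb_ft, fib_cons, List.head?_cons,
      headI_ofFn', head?_ofFn, ext_zero']
    cases hv : v 0 with
    | false => simp [hv]
    | true => simp [hv]

lemma R2a (n k : ℕ) :
    a1 (n+1) (k+1) = b0 n k + (if n = 0 ∧ k = 0 then 1 else 0) := by
  rw [a1, b0, card_sum, card_sum, sum_cons]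
  cases n with
  | zero =>
    rw [Fintype.sum_unique, Fintype.sum_unique]
    simp only [ofFn_cons, List.ofFn_zero]
    simp [nb_ff, nb_ft, fib_cons, fib_nil, ext_ge, nb]
  | succ m =>
    rw [if_neg (by simp), Nat.add_zero]
    apply Finset.sum_congr rfl
    intro v _
    simp only [ofFn_cons, nb_ff, nb_ft, fib_cons, List.head?_cons,
      headI_ofFn', head?_ofFn, ext_zero']
    cases hv : v 0 with
    | false =>
      simp [hv, show ∀ x : ℕ, (1 + x = k + 1) ↔ (x = k) from fun x => by omega]
    | true => simp [hv]

lemma R2b (n : ℕ) : a1 (n+1) 0 = 0 := by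
  rw [a1, card_sum, sum_cons]
  apply Finset.sum_eq_zero
  intro v _
  simp only [ofFn_cons, nb_ff, nb_ft, List.head?_cons]
  simp [show ∀ x : ℕ, ¬(1 + x = 0) from fun x => by omega]

lemma R3 (n k : ℕ) :
    b0 (n+1) k = a0 n k + a1 n k + (if n = 0 ∧ k = 0 then 1 else 0) := by
  rw [b0, a0, a1, card_sum, card_sum, card_sum, sum_cons]
  cases n with
  | zero =>
    rw [Fintype.sum_unique, Fintype.sum_unique, Fintype.sum_unique]
    simp only [ofFn_cons, List.ofFn_zero]
    simp [nb_tf, nb_tt, fib_cons, fib_nil, ext_ge, nb]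
    by_cases hk : k = 0 <;> simp [hk] <;> omega
  | succ m =>
    rw [if_neg (by simp), Nat.add_zero, ← Finset.sum_add_distrib]
    apply Finset.sum_congr rfl
    intro v _
    simp only [ofFn_cons, nb_tf, nb_tt, fib_cons, List.head?_cons,
      headI_ofFn', head?_ofFn, ext_zero']
    cases hv : v 0 with
    | false => simp [hv]
    | true => simp [hv]

lemma R4 (n k : ℕ) :
    f n k = a0 n k + a1 n k + (if n = 0 ∧ k = 0 then 1 else 0) := by
  rw [f, a0, a1, card_sum, card_sum, card_sum]
  have hpt : ∀ w : Fin n → Bool,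
      (FibWord w ∧ NCN w = k) ↔ (FibWord w ∧ nb false (List.ofFn w) = k) := by
    intro w
    constructor
    · rintro ⟨hf, hk⟩
      exact ⟨hf, by rw [← NCN_eq w hf]; exact hk⟩
    · rintro ⟨hf, hk⟩
      exact ⟨hf, by rw [NCN_eq w hf]; exact hk⟩
  simp only [hpt]
  cases n with
  | zero =>
    rw [Fintype.sum_unique, Fintype.sum_unique, Fintype.sum_unique]
    simp [List.ofFn_zero, fib_nil, nb]
    by_cases hk : k = 0 <;> simp [hk] <;> omega
  | succ m =>
    rw [if_neg (by simp), Nat.add_zero, ← Finset.sum_add_distrib]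
    apply Finset.sum_congr rfl
    intro w _
    simp only [head?_ofFn]
    cases hw : w 0 with
    | false => simp [hw]
    | true => simp [hw]

/-! ### Generating functions -/

noncomputable def A0 : MvPowerSeries (Fin 2) ℤ := fun d => (a0 (d 0) (d 1) : ℤ)
noncomputable def A1 : MvPowerSeries (Fin 2) ℤ := fun d => (a1 (d 0) (d 1) : ℤ)
noncomputable def B0 : MvPowerSeries (Fin 2) ℤ := fun d => (b0 (d 0) (d 1) : ℤ)

lemma coeffA0 (d : Fin 2 →₀ ℕ) : MvPowerSeries.coeff d A0 = (a0 (d 0) (d 1) : ℤ) := rfl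
lemma coeffA1 (d : Fin 2 →₀ ℕ) : MvPowerSeries.coeff d A1 = (a1 (d 0) (d 1) : ℤ) := rfl
lemma coeffB0 (d : Fin 2 →₀ ℕ) : MvPowerSeries.coeff d B0 = (b0 (d 0) (d 1) : ℤ) := rfl
lemma coeffF (d : Fin 2 →₀ ℕ) : MvPowerSeries.coeff d F = (f (d 0) (d 1) : ℤ) := rfl

noncomputable abbrev eX : Fin 2 →₀ ℕ := Finsupp.single 0 1
noncomputable abbrev eY : Fin 2 →₀ ℕ := Finsupp.single 1 1

lemma eX0 : eX 0 = 1 := by simp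
lemma eX1 : eX 1 = 0 := by
  simp [Finsupp.single_apply, show (0 : Fin 2) ≠ 1 from by decide]
lemma eY0 : eY 0 = 0 := by
  simp [Finsupp.single_apply, show (1 : Fin 2) ≠ 0 from by decide]
lemma eY1 : eY 1 = 1 := by simp

lemma le_eX (d : Fin 2 →₀ ℕ) : eX ≤ d ↔ 1 ≤ d 0 := by
  rw [Finsupp.le_def, Fin.forall_fin_two, eX0, eX1]
  omega

lemma le_eXY (d : Fin 2 →₀ ℕ) : eX + eY ≤ d ↔ 1 ≤ d 0 ∧ 1 ≤ d 1 := by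
  rw [Finsupp.le_def, Fin.forall_fin_two]
  rw [Finsupp.add_apply, Finsupp.add_apply, eX0, eX1, eY0, eY1]

lemma sub_eX0 (d : Fin 2 →₀ ℕ) : (d - eX) 0 = d 0 - 1 := by
  rw [Finsupp.tsub_apply, eX0]
lemma sub_eX1 (d : Fin 2 →₀ ℕ) : (d - eX) 1 = d 1 := by
  rw [Finsupp.tsub_apply, eX1, Nat.sub_zero]
lemma sub_eXY0 (d : Fin 2 →₀ ℕ) : (d - (eX + eY)) 0 = d 0 - 1 := by
  rw [Finsupp.tsub_apply, Finsupp.add_apply, eX0, eY0]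
lemma sub_eXY1 (d : Fin 2 →₀ ℕ) : (d - (eX + eY)) 1 = d 1 - 1 := by
  rw [Finsupp.tsub_apply, Finsupp.add_apply, eX1, eY1]

lemma eq_eXY (d : Fin 2 →₀ ℕ) : d = eX + eY ↔ d 0 = 1 ∧ d 1 = 1 := by
  rw [Finsupp.ext_iff, Fin.forall_fin_two, Finsupp.add_apply, Finsupp.add_apply,
    eX0, eX1, eY0, eY1]
lemma eq_eX (d : Fin 2 →₀ ℕ) : d = eX ↔ d 0 = 1 ∧ d 1 = 0 := by
  rw [Finsupp.ext_iff, Fin.forall_fin_two, eX0, eX1]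
lemma eq_zeroD (d : Fin 2 →₀ ℕ) : d = 0 ↔ d 0 = 0 ∧ d 1 = 0 := by
  rw [Finsupp.ext_iff, Fin.forall_fin_two]
  simp

lemma coeff_mono (d e : Fin 2 →₀ ℕ) (φ : MvPowerSeries (Fin 2) ℤ) :
    MvPowerSeries.coeff d (MvPowerSeries.monomial e 1 * φ)
      = if e ≤ d then MvPowerSeries.coeff (d - e) φ else 0 := by
  rw [MvPowerSeries.coeff_monomial_mul]
  split <;> simp

lemma hX : (MvPowerSeries.X 0 : MvPowerSeries (Fin 2) ℤ) = MvPowerSeries.monomial eX 1 :=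
  MvPowerSeries.X_def 0

lemma hXY : (MvPowerSeries.X 0 : MvPowerSeries (Fin 2) ℤ) * MvPowerSeries.X 1
    = MvPowerSeries.monomial (eX + eY) 1 := by
  rw [MvPowerSeries.X_def, MvPowerSeries.X_def, MvPowerSeries.monomial_mul_monomial, one_mul]

lemma eqA0 : A0 = MvPowerSeries.X 0 * MvPowerSeries.X 1 * A0
    + MvPowerSeries.X 0 * A1 + MvPowerSeries.X 0 * MvPowerSeries.X 1 := by
  apply MvPowerSeries.ext
  intro d
  rw [map_add, map_add, hXY, hX, coeff_mono, coeff_mono, MvPowerSeries.coeff_monomial,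
    coeffA0, coeffA0, coeffA1, sub_eXY0, sub_eXY1, sub_eX0, sub_eX1]
  simp only [le_eXY, le_eX, eq_eXY]
  rcases hn : d 0 with _ | n
  · rw [if_neg (by omega), if_neg (by omega), if_neg (by omega)]
    simp [a0_zero]
  · rcases hk : d 1 with _ | k
    · rw [if_neg (by omega), if_pos (by omega), if_neg (by omega)]
      simp [R1b n]
    · rw [if_pos (by omega), if_pos (by omega),
        if_congr (show (n + 1 = 1 ∧ k + 1 = 1) ↔ (n = 0 ∧ k = 0) by omega) rfl rfl]
      rw [show n + 1 - 1 = n from rfl, show k + 1 - 1 = k from rfl, R1a n k]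
      push_cast
      ring

lemma eqA1 : A1 = MvPowerSeries.X 0 * MvPowerSeries.X 1 * B0
    + MvPowerSeries.X 0 * MvPowerSeries.X 1 := by
  apply MvPowerSeries.ext
  intro d
  rw [map_add, hXY, coeff_mono, MvPowerSeries.coeff_monomial,
    coeffA1, coeffB0, sub_eXY0, sub_eXY1]
  simp only [le_eXY, eq_eXY]
  rcases hn : d 0 with _ | n
  · rw [if_neg (by omega), if_neg (by omega)]
    simp [a1_zero]
  · rcases hk : d 1 with _ | k
    · rw [if_neg (by omega), if_neg (by omega)]
      simp [R2b n]
    · rw [if_pos (by omega),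
        if_congr (show (n + 1 = 1 ∧ k + 1 = 1) ↔ (n = 0 ∧ k = 0) by omega) rfl rfl]
      rw [show n + 1 - 1 = n from rfl, show k + 1 - 1 = k from rfl, R2a n k]
      push_cast
      ring

lemma eqB0 : B0 = MvPowerSeries.X 0 * A0 + MvPowerSeries.X 0 * A1 + MvPowerSeries.X 0 := by
  apply MvPowerSeries.ext
  intro d
  rw [map_add, map_add, hX, coeff_mono, coeff_mono, MvPowerSeries.coeff_monomial,
    coeffB0, coeffA0, coeffA1, sub_eX0, sub_eX1]
  simp only [le_eX, eq_eX]
  rcases hn : d 0 with _ | n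
  · rw [if_neg (by omega), if_neg (by omega), if_neg (by omega)]
    simp [b0_zero]
  · rw [if_pos (by omega), if_pos (by omega),
      if_congr (show (n + 1 = 1 ∧ d 1 = 0) ↔ (n = 0 ∧ d 1 = 0) by omega) rfl rfl]
    rw [show n + 1 - 1 = n from rfl, R3 n (d 1)]
    push_cast
    ring

lemma eqF : F = A0 + A1 + 1 := by
  apply MvPowerSeries.ext
  intro d
  rw [map_add, map_add, MvPowerSeries.coeff_one, coeffF, coeffA0, coeffA1]
  rw [if_congr (eq_zeroD d) rfl rfl, R4 (d 0) (d 1)]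
  push_cast
  ring

theorem genfun_identity :
    F * ((MvPowerSeries.X 0 : MvPowerSeries (Fin 2) ℤ) ^ 3 * MvPowerSeries.X 1 ^ 2
        - MvPowerSeries.X 0 ^ 3 * MvPowerSeries.X 1
        - MvPowerSeries.X 0 ^ 2 * MvPowerSeries.X 1
        - MvPowerSeries.X 0 * MvPowerSeries.X 1 + 1)
      = -((MvPowerSeries.X 0 : MvPowerSeries (Fin 2) ℤ) ^ 2 * MvPowerSeries.X 1 ^ 2
        - MvPowerSeries.X 0 ^ 2 * MvPowerSeries.X 1
        - MvPowerSeries.X 0 * MvPowerSeries.X 1 - 1) := by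
  have e1 := eqA0
  have e2 := eqA1
  have e3 := eqB0
  have e4 := eqF
  linear_combination (((MvPowerSeries.X 0 : MvPowerSeries (Fin 2) ℤ) ^ 3 * MvPowerSeries.X 1 ^ 2
        - MvPowerSeries.X 0 ^ 3 * MvPowerSeries.X 1
        - MvPowerSeries.X 0 ^ 2 * MvPowerSeries.X 1
        - MvPowerSeries.X 0 * MvPowerSeries.X 1 + 1)) * e4 + e1
    + (1 + (MvPowerSeries.X 0 : MvPowerSeries (Fin 2) ℤ)
        - MvPowerSeries.X 0 * MvPowerSeries.X 1) * e2
    + ((MvPowerSeries.X 0 : MvPowerSeries (Fin 2) ℤ) * MvPowerSeries.X 1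
        + MvPowerSeries.X 0 ^ 2 * MvPowerSeries.X 1
        - MvPowerSeries.X 0 ^ 2 * MvPowerSeries.X 1 ^ 2) * e3
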